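/- (Strict decrease of the maximum violation under SHRINK.) Suppose s ∉ 𝒮(Δ), the shrinking set 𝒢 is nonempty and proper, v_i(s) = u for all i ∈ 𝒢, and v_i(s) > v_j(s) for all i ∈ 𝒢 and j ∉ 𝒢. Then max_{1≤i≤q} v_i(s_*) < u = max_{1≤i≤q} v_i(s). -/

import Mathlib

/-!
Since `s ∉ 𝒮(Δ)` and every violation ratio is at most `u`, we have `u > 1`; since the ratios
off `𝒢` are strictly below `u`, each `t_i` is `< 1`, so `0 < t_* < 1`. SHRINK scales the
coordinates in `𝓘_𝒢` by `t_*`, so `‖s_*^{𝓘_i}‖² = t_*² ‖s^{𝓘_i ∩ 𝓘_𝒢}‖² + ‖s^{𝓘_i ∖ 𝓘_𝒢}‖²`.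
For `i ∈ 𝒢` this is `t_*² u² Δ_i²`, and for `i ∉ 𝒢` the inequality `t_i ≤ t_*` says exactly
that it is at most `t_*² u² Δ_i²`. Hence every `v_i(s_*) ≤ t_* u < u`.
-/

/-- Coordinate projection: `(proj I x) j = x j` if `j ∈ I`, else `0`. -/
noncomputable def proj {n : ℕ} (I : Finset (Fin n)) (x : EuclideanSpace ℝ (Fin n)) :
    EuclideanSpace ℝ (Fin n) :=
  WithLp.toLp 2 (fun j => if j ∈ I then x j else 0)

lemma div_sqrt_sub_sq_lt_one {a b c : ℝ} (hb : 0 ≤ b) (h : a ^ 2 + b ^ 2 < c) :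
    b / √(c - a ^ 2) < 1 := by
  have hpos : 0 < √(c - a ^ 2) := Real.sqrt_pos.2 (by nlinarith)
  rw [div_lt_one hpos, Real.lt_sqrt hb]
  linarith

lemma mul_sq_add_sq_le_of_div_sqrt_sub_sq_le {a b c t : ℝ} (hb : 0 ≤ b)
    (h : a ^ 2 + b ^ 2 < c) (ht : b / √(c - a ^ 2) ≤ t) :
    t ^ 2 * a ^ 2 + b ^ 2 ≤ t ^ 2 * c := by
  have hpos : 0 < √(c - a ^ 2) := Real.sqrt_pos.2 (by nlinarith)
  have hb_le : b ≤ t * √(c - a ^ 2) := (div_le_iff₀ hpos).1 ht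
  have hsq : b ^ 2 ≤ t ^ 2 * (c - a ^ 2) := by
    calc b ^ 2 ≤ (t * √(c - a ^ 2)) ^ 2 := pow_le_pow_left₀ hb hb_le 2
      _ = t ^ 2 * (c - a ^ 2) := by rw [mul_pow, Real.sq_sqrt (by nlinarith)]
  linarith

lemma sq_lt_sq_mul_sq_of_div_lt {a d u : ℝ} (ha : 0 ≤ a) (hd : 0 < d) (h : a / d < u) :
    a ^ 2 < u ^ 2 * d ^ 2 := by
  rw [← mul_pow]
  exact pow_lt_pow_left₀ ((div_lt_iff₀ hd).1 h) ha two_ne_zero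

lemma div_lt_of_sq_le_mul_sq {a d t u : ℝ} (hd : 0 < d) (hu : 0 < u) (ht₀ : 0 ≤ t) (ht₁ : t < 1)
    (h : a ^ 2 ≤ t ^ 2 * (u ^ 2 * d ^ 2)) : a / d < u := by
  rw [div_lt_iff₀ hd]
  refine lt_of_pow_lt_pow_left₀ 2 (mul_pos hu hd).le ?_
  calc a ^ 2 ≤ t ^ 2 * (u * d) ^ 2 := by rwa [mul_pow]
    _ < (u * d) ^ 2 :=
      mul_lt_of_lt_one_left (by positivity) (pow_lt_one₀ ht₀ ht₁ two_ne_zero)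

section Projection

variable {n : ℕ}

lemma norm_proj_sq (I : Finset (Fin n)) (x : EuclideanSpace ℝ (Fin n)) :
    ‖proj I x‖ ^ 2 = ∑ j ∈ I, x j ^ 2 := by
  rw [EuclideanSpace.norm_sq_eq, ← Finset.sum_subset (Finset.subset_univ I)]
  · refine Finset.sum_congr rfl fun j hj => ?_
    simp [proj, hj]
  · intro j _ hj
    simp [proj, hj]

@[simp]
lemma proj_empty (x : EuclideanSpace ℝ (Fin n)) : proj ∅ x = 0 := by
  ext j
  simp [proj]

lemma norm_proj_sq_eq_inter_add_sdiff (I J : Finset (Fin n)) (x : EuclideanSpace ℝ (Fin n)) :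
    ‖proj I x‖ ^ 2 = ‖proj (I ∩ J) x‖ ^ 2 + ‖proj (I \ J) x‖ ^ 2 := by
  rw [norm_proj_sq, norm_proj_sq, norm_proj_sq, Finset.sum_inter_add_sum_sdiff]

lemma proj_inter_add_smul_proj (I J : Finset (Fin n)) (x : EuclideanSpace ℝ (Fin n)) (c : ℝ) :
    proj (I ∩ J) (x + c • proj J x) = (1 + c) • proj (I ∩ J) x := by
  ext j
  by_cases hj : j ∈ J <;> simp [proj, hj, add_mul]

lemma proj_sdiff_add_smul_proj (I J : Finset (Fin n)) (x : EuclideanSpace ℝ (Fin n)) (c : ℝ) :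
    proj (I \ J) (x + c • proj J x) = proj (I \ J) x := by
  ext j
  by_cases hj : j ∈ J <;> simp [proj, hj]

lemma norm_proj_add_smul_proj_sq (I J : Finset (Fin n)) (x : EuclideanSpace ℝ (Fin n)) (t : ℝ) :
    ‖proj I (x + (t - 1) • proj J x)‖ ^ 2
      = t ^ 2 * ‖proj (I ∩ J) x‖ ^ 2 + ‖proj (I \ J) x‖ ^ 2 := by
  rw [norm_proj_sq_eq_inter_add_sdiff I J, proj_inter_add_smul_proj, proj_sdiff_add_smul_proj,
    add_sub_cancel, norm_smul, mul_pow, Real.norm_eq_abs, sq_abs]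

lemma norm_proj_shrink_sq_le_of_subset {I J : Finset (Fin n)} (hIJ : I ⊆ J)
    (x : EuclideanSpace ℝ (Fin n)) (t : ℝ) {c : ℝ} (hx : ‖proj I x‖ ^ 2 ≤ c) :
    ‖proj I (x + (t - 1) • proj J x)‖ ^ 2 ≤ t ^ 2 * c := by
  rw [norm_proj_add_smul_proj_sq, Finset.inter_eq_left.2 hIJ,
    Finset.sdiff_eq_empty_iff_subset.2 hIJ, proj_empty, norm_zero]
  simpa using mul_le_mul_of_nonneg_left hx (sq_nonneg t)

lemma norm_proj_shrink_sq_le {I J : Finset (Fin n)} {x : EuclideanSpace ℝ (Fin n)} {c t : ℝ}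
    (hx : ‖proj I x‖ ^ 2 < c)
    (ht : ‖proj (I \ J) x‖ / √(c - ‖proj (I ∩ J) x‖ ^ 2) ≤ t) :
    ‖proj I (x + (t - 1) • proj J x)‖ ^ 2 ≤ t ^ 2 * c := by
  rw [norm_proj_sq_eq_inter_add_sdiff I J] at hx
  rw [norm_proj_add_smul_proj_sq]
  exact mul_sq_add_sq_le_of_div_sqrt_sub_sq_le (norm_nonneg _) hx ht

lemma shrink_factor_lt_one {I J : Finset (Fin n)} {x : EuclideanSpace ℝ (Fin n)} {u d : ℝ}
    (hu : 1 < u) (hd : 0 < d) (hx : ‖proj I x‖ / d < u) :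
    max (1 / u) (‖proj (I \ J) x‖ / √(u ^ 2 * d ^ 2 - ‖proj (I ∩ J) x‖ ^ 2)) < 1 := by
  have hsq := sq_lt_sq_mul_sq_of_div_lt (norm_nonneg _) hd hx
  rw [norm_proj_sq_eq_inter_add_sdiff I J] at hsq
  exact max_lt ((div_lt_one (by linarith)).2 hu) (div_sqrt_sub_sq_lt_one (norm_nonneg _) hsq)

end Projection

theorem shrink_max_viol_lt_general {n q : ℕ} (I : Fin q → Finset (Fin n)) (Δ : Fin q → ℝ)
    (hΔ : ∀ i, 0 < Δ i) (s : EuclideanSpace ℝ (Fin n)) (u : ℝ)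
    (𝒢 : Finset (Fin q)) (h𝒢ne : 𝒢.Nonempty)
    (hsout : ¬ (∀ i, ‖proj (I i) s‖ ≤ Δ i))
    (hvG : ∀ i ∈ 𝒢, ‖proj (I i) s‖ / Δ i = u)
    (hvlt : ∀ i ∈ 𝒢, ∀ j ∉ 𝒢, ‖proj (I j) s‖ / Δ j < ‖proj (I i) s‖ / Δ i)
    (IG : Finset (Fin n)) (hIG : IG = 𝒢.biUnion I)
    (tf : Fin q → ℝ)
    (htf : ∀ i, tf i = if i ∈ 𝒢 then 1 / u
      else max (1 / u)
        (‖proj (I i \ IG) s‖ / Real.sqrt (u ^ 2 * Δ i ^ 2 - ‖proj (I i ∩ IG) s‖ ^ 2)))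
    (tstar : ℝ)
    (htstar : tstar = Finset.univ.sup' (h𝒢ne.mono (Finset.subset_univ 𝒢)) tf)
    (sstar : EuclideanSpace ℝ (Fin n))
    (hsstar : sstar = s + (tstar - 1) • proj IG s) :
    Finset.univ.sup' (h𝒢ne.mono (Finset.subset_univ 𝒢))
        (fun i => ‖proj (I i) sstar‖ / Δ i) < u ∧
    u = Finset.univ.sup' (h𝒢ne.mono (Finset.subset_univ 𝒢))
        (fun i => ‖proj (I i) s‖ / Δ i) := by
  obtain ⟨i₀, hi₀⟩ := h𝒢ne
  have hv_lt : ∀ i ∉ 𝒢, ‖proj (I i) s‖ / Δ i < u := fun i hi => hvG i₀ hi₀ ▸ hvlt i₀ hi₀ i hi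
  have hv_le : ∀ i, ‖proj (I i) s‖ / Δ i ≤ u := fun i => by
    by_cases hi : i ∈ 𝒢
    exacts [(hvG i hi).le, (hv_lt i hi).le]
  have hu : 1 < u := by
    obtain ⟨k, hk⟩ := not_forall.1 hsout
    exact ((one_lt_div (hΔ k)).2 (not_le.1 hk)).trans_le (hv_le k)
  have htf_le : ∀ i, tf i ≤ tstar := fun i => htstar ▸ Finset.le_sup' tf (Finset.mem_univ i)
  have ht_pos : 0 < tstar :=
    lt_of_lt_of_le (by rw [htf i₀, if_pos hi₀]; positivity) (htf_le i₀)
  have ht_lt : tstar < 1 := htstar ▸ (Finset.sup'_lt_iff _).2 fun i _ => by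
    rw [htf i]
    split_ifs with hi
    exacts [(div_lt_one (by linarith)).2 hu, shrink_factor_lt_one hu (hΔ i) (hv_lt i hi)]
  refine ⟨(Finset.sup'_lt_iff _).2 fun i _ =>
      div_lt_of_sq_le_mul_sq (hΔ i) (by linarith) ht_pos.le ht_lt ?_,
    le_antisymm (Finset.le_sup'_of_le _ (Finset.mem_univ i₀) (hvG i₀ hi₀).ge)
      (Finset.sup'_le _ _ fun i _ => hv_le i)⟩
  rw [hsstar]
  by_cases hi : i ∈ 𝒢
  · refine norm_proj_shrink_sq_le_of_subset (hIG ▸ Finset.subset_biUnion_of_mem I hi) _ _ ?_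
    rw [(div_eq_iff (hΔ i).ne').1 (hvG i hi), mul_pow]
  · refine norm_proj_shrink_sq_le
      (sq_lt_sq_mul_sq_of_div_lt (norm_nonneg _) (hΔ i) (hv_lt i hi)) (le_trans ?_ (htf_le i))
    rw [htf i, if_neg hi]
    exact le_max_right _ _

/-- Strict decrease of the maximum violation ratio under the SHRINK subroutine:
`max_i v_i(s_*) < u = max_i v_i(s)`. -/
theorem shrink_max_viol_lt {n q : ℕ} (I : Fin q → Finset (Fin n)) (Δ : Fin q → ℝ)
    (hΔ : ∀ i, 0 < Δ i) (s : EuclideanSpace ℝ (Fin n)) (u : ℝ)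
    (𝒢 : Finset (Fin q)) (h𝒢ne : 𝒢.Nonempty) (h𝒢pr : 𝒢 ≠ Finset.univ)
    (hsout : ¬ (∀ i, ‖proj (I i) s‖ ≤ Δ i))
    (hvG : ∀ i ∈ 𝒢, ‖proj (I i) s‖ / Δ i = u)
    (hvlt : ∀ i ∈ 𝒢, ∀ j ∉ 𝒢, ‖proj (I j) s‖ / Δ j < ‖proj (I i) s‖ / Δ i)
    (IG : Finset (Fin n)) (hIG : IG = 𝒢.biUnion I)
    (tf : Fin q → ℝ)
    (htf : ∀ i, tf i = if i ∈ 𝒢 then 1 / u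
      else max (1 / u)
        (‖proj (I i \ IG) s‖ / Real.sqrt (u ^ 2 * Δ i ^ 2 - ‖proj (I i ∩ IG) s‖ ^ 2)))
    (tstar : ℝ)
    (htstar : tstar = Finset.univ.sup' (h𝒢ne.mono (Finset.subset_univ 𝒢)) tf)
    (sstar : EuclideanSpace ℝ (Fin n))
    (hsstar : sstar = s + (tstar - 1) • proj IG s) :
    Finset.univ.sup' (h𝒢ne.mono (Finset.subset_univ 𝒢))
        (fun i => ‖proj (I i) sstar‖ / Δ i) < u ∧
    u = Finset.univ.sup' (h𝒢ne.mono (Finset.subset_univ 𝒢))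
        (fun i => ‖proj (I i) s‖ / Δ i) :=
  shrink_max_viol_lt_general I Δ hΔ s u 𝒢 h𝒢ne hsout hvG hvlt IG hIG tf htf tstar htstar sstar
    hsstar
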